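/- arXiv:2602.17787 — 6 statements merged into one kernel-verified Lean document; each statement's English description precedes it below -/
import Mathlib

section
/- Consider the hardmax platform game with N = 2 platforms, M = 3 models, and three user types θ_A, θ_B, θ_C each of weight 1/3, with scores S_1(θ_A)=1/5, S_1(θ_B)=0, S_1(θ_C)=1/10; S_2(θ_A)=1/10, S_2(θ_B)=1/5, S_2(θ_C)=0; S_3(θ_A)=0, S_3(θ_B)=1/10, S_3(θ_C)=1/5. Then no strategy profile (f_1, f_2) ∈ {1,2,3}² is a pure Nash equilibrium. -/
open Finset

noncomputable section

/-- `𝔸_f(θ)`: the set of platforms attaining the maximal score for user type `θ`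
under the strategy profile `f`. -/
def attains {Θ : Type*} [Fintype Θ] {M N : ℕ} (S : Fin M → Θ → ℝ)
    (f : Fin N → Fin M) (θ : Θ) : Finset (Fin N) :=
  Finset.univ.filter fun i => ∀ k : Fin N, S (f k) θ ≤ S (f i) θ

/-- Hardmax user-choice probability `p_i(θ; f)`. -/
def hardP {Θ : Type*} [Fintype Θ] {M N : ℕ} (S : Fin M → Θ → ℝ)
    (f : Fin N → Fin M) (θ : Θ) (i : Fin N) : ℝ :=
  if i ∈ attains S f θ then 1 / (attains S f θ).card else 0

/-- Platform `i`'s utility `U_i(f)` in the hardmax platform game. -/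
def util {Θ : Type*} [Fintype Θ] {M N : ℕ} (π : Θ → ℝ) (S : Fin M → Θ → ℝ)
    (f : Fin N → Fin M) (i : Fin N) : ℝ :=
  ∑ θ, π θ * hardP S f θ i * S (f i) θ

/-- Pure Nash equilibrium of the hardmax platform game: no platform can
improve its utility by unilaterally deviating. -/
def IsPNE {Θ : Type*} [Fintype Θ] {M N : ℕ} (π : Θ → ℝ) (S : Fin M → Θ → ℝ)
    (f : Fin N → Fin M) : Prop :=
  ∀ (i : Fin N) (m : Fin M), util π S (Function.update f i m) i ≤ util π S f i

/-!
The scores are cyclic: model `m + 1` is model `m` shifted by one user type (indices mod 3).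
Against a rival playing `m`, copying `m` earns `1/20`, playing `m + 1` earns `1/15` and playing
`m + 2` earns `1/10`, so `m + 2` is the unique best response to `m`. Two mutual best responses
`a = b + 2`, `b = a + 2` would give `b = b + 4 = b + 1`, which is impossible.
-/

def duelUtil {Θ : Type*} [Fintype Θ] {M : ℕ} (π : Θ → ℝ) (S : Fin M → Θ → ℝ)
    (a b : Fin M) : ℝ :=
  ∑ θ, π θ * (if S b θ < S a θ then 1 else if S a θ = S b θ then 1 / 2 else 0) * S a θ

section TwoPlatforms

variable {Θ : Type*} [Fintype Θ] {M : ℕ} (π : Θ → ℝ) (S : Fin M → Θ → ℝ)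

theorem hardP_fin_two (f : Fin 2 → Fin M) (θ : Θ) {i j : Fin 2} (hij : i ≠ j) :
    hardP S f θ i =
      if S (f j) θ < S (f i) θ then 1 else if S (f i) θ = S (f j) θ then 1 / 2 else 0 := by
  have huniv : (Finset.univ : Finset (Fin 2)) = {i, j} := by
    ext l; simp only [Finset.mem_univ, Finset.mem_insert, Finset.mem_singleton, true_iff]; omega
  have hall (k : Fin 2) :
      (∀ l, S (f l) θ ≤ S (f k) θ) ↔ S (f i) θ ≤ S (f k) θ ∧ S (f j) θ ≤ S (f k) θ := by
    refine ⟨fun h => ⟨h i, h j⟩, fun ⟨hi, hj⟩ l => ?_⟩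
    obtain rfl | rfl : l = i ∨ l = j := by omega
    exacts [hi, hj]
  simp only [hardP, attains, hall, huniv, Finset.filter_insert, Finset.filter_singleton]
  rcases lt_trichotomy (S (f j) θ) (S (f i) θ) with h | h | h
  · simp [h, h.not_ge, h.le]
  · simp [h, hij]
  · simp [h.not_ge, h.le, h.not_gt, h.ne, hij]

theorem util_fin_two (f : Fin 2 → Fin M) {i j : Fin 2} (hij : i ≠ j) :
    util π S f i = duelUtil π S (f i) (f j) := by
  simp only [util, duelUtil, hardP_fin_two S f _ hij]

theorem IsPNE.duelUtil_le {f : Fin 2 → Fin M} (hf : IsPNE π S f) {i j : Fin 2} (hij : i ≠ j)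
    (m : Fin M) : duelUtil π S m (f j) ≤ duelUtil π S (f i) (f j) := by
  have h := hf i m
  rwa [util_fin_two π S _ hij, util_fin_two π S _ hij, Function.update_self,
    Function.update_of_ne hij.symm] at h

theorem IsPNE.eq_of_unique_bestResponse {f : Fin 2 → Fin M} (hf : IsPNE π S f)
    (β : Fin M → Fin M) (hβ : ∀ b c, c ≠ β b → duelUtil π S c b < duelUtil π S (β b) b)
    {i j : Fin 2} (hij : i ≠ j) : f i = β (f j) := by
  by_contra h
  exact (hβ (f j) (f i) h).not_ge (hf.duelUtil_le π S hij _)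

theorem not_isPNE_of_unique_bestResponse (f : Fin 2 → Fin M) (β : Fin M → Fin M)
    (hβ : ∀ b c, c ≠ β b → duelUtil π S c b < duelUtil π S (β b) b)
    (hcycle : ∀ b, β (β b) ≠ b) : ¬ IsPNE π S f := by
  intro hf
  have h₀ := hf.eq_of_unique_bestResponse π S β hβ (i := 0) (j := 1) (by decide)
  have h₁ := hf.eq_of_unique_bestResponse π S β hβ (i := 1) (j := 0) (by decide)
  exact hcycle (f 1) (by rw [← h₀, ← h₁])

end TwoPlatforms

theorem duelUtil_cyclic (a b : Fin 3) :
    duelUtil (fun _ : Fin 3 => (1 : ℝ) / 3)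
        (![![1/5, 0, 1/10], ![1/10, 1/5, 0], ![0, 1/10, 1/5]] : Fin 3 → Fin 3 → ℝ) a b =
      if a = b then 1 / 20 else if a = b + 1 then 1 / 15 else 1 / 10 := by
  fin_cases a <;> fin_cases b <;> norm_num [duelUtil, Fin.sum_univ_three, Matrix.cons_val_two,
    Matrix.vecHead, Matrix.vecTail] <;> decide

/-- In the hardmax platform game with `N = 2` platforms, `M = 3` models,
three user types of weight `1/3` each, and the given scores, no strategy profile
is a pure Nash equilibrium. -/
theorem stmt0 :
    ∀ f : Fin 2 → Fin 3,
      ¬ IsPNE (fun _ : Fin 3 => (1 : ℝ) / 3)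
        (![![1/5, 0, 1/10], ![1/10, 1/5, 0], ![0, 1/10, 1/5]] : Fin 3 → Fin 3 → ℝ) f := by
  intro f
  refine not_isPNE_of_unique_bestResponse _ _ f (fun b => b + 2) ?_ (by decide)
  intro b c hc
  simp only [duelUtil_cyclic]
  fin_cases b <;> fin_cases c <;> simp at hc ⊢ <;> norm_num
end
end

section
/- In the hardmax platform game with M ≥ N, let f* = (f*_1,…,f*_N) be a fully differentiated profile, i.e., the models f*_1,…,f*_N are pairwise distinct. Then f* is a pure Nash equilibrium if and only if for every platform i and every model m with m ≠ f*_i: T_{f*_i} − T_m ≥ δ_i((m; f*_{−i})) − δ_i(f*), where δ_i((m; f*_{−i})) is platform i's deviation advantage in the profile obtained from f* by replacing f*_i with m. -/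
open Finset

noncomputable section

/-- Attraction term `Z_i(θ; f)`. -/
def Zterm {Θ : Type*} [Fintype Θ] {M N : ℕ} (S : Fin M → Θ → ℝ)
    (f : Fin N → Fin M) (θ : Θ) (i : Fin N) : ℝ :=
  if i ∈ attains S f θ then
    ((N : ℝ) - (attains S f θ).card) / (attains S f θ).card * S (f i) θ
  else -S (f i) θ

/-- Average score `T_j` of model `j`. -/
def avgT {Θ : Type*} [Fintype Θ] {M : ℕ} (π : Θ → ℝ) (S : Fin M → Θ → ℝ)
    (j : Fin M) : ℝ :=
  ∑ θ, π θ * S j θ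

/-- Deviation advantage `δ_i(f)` of platform `i` under profile `f`. -/
def devAdv {Θ : Type*} [Fintype Θ] {M N : ℕ} (π : Θ → ℝ) (S : Fin M → Θ → ℝ)
    (f : Fin N → Fin M) (i : Fin N) : ℝ :=
  ∑ θ, π θ * Zterm S f θ i

lemma util_key {Θ : Type*} [Fintype Θ] {M N : ℕ} (π : Θ → ℝ) (S : Fin M → Θ → ℝ)
    (f : Fin N → Fin M) (i : Fin N) :
    (N : ℝ) * util π S f i = avgT π S (f i) + devAdv π S f i := by
  unfold util avgT devAdv
  rw [Finset.mul_sum, ← Finset.sum_add_distrib]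
  refine Finset.sum_congr rfl fun θ _ => ?_
  unfold hardP Zterm
  by_cases h : i ∈ attains S f θ
  · have hA : (0 : ℝ) < (attains S f θ).card := by
      have : 0 < (attains S f θ).card := Finset.card_pos.2 ⟨i, h⟩
      exact_mod_cast this
    simp only [h, if_true]
    field_simp
    ring
  · simp only [h, if_false]
    ring

/-- a fully differentiated profile `f*` is a pure Nash equilibrium iff
`T_{f*_i} − T_m ≥ δ_i((m; f*_{−i})) − δ_i(f*)` for every platform `i` and model `m ≠ f*_i`. -/
theorem stmt3 {Θ : Type*} [Fintype Θ] [Nonempty Θ] {M N : ℕ}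
    (hM : 1 ≤ M) (hN : 1 ≤ N)
    (π : Θ → ℝ) (hπ0 : ∀ θ, 0 ≤ π θ) (hπ1 : ∑ θ, π θ = 1)
    (S : Fin M → Θ → ℝ) (hMN : N ≤ M)
    (fstar : Fin N → Fin M) (hdiff : Function.Injective fstar) :
    IsPNE π S fstar ↔
      ∀ (i : Fin N) (m : Fin M), m ≠ fstar i →
        avgT π S (fstar i) - avgT π S m ≥
          devAdv π S (Function.update fstar i m) i - devAdv π S fstar i := by
  have hNpos : (0 : ℝ) < N := by exact_mod_cast hN
  constructor
  · intro h i m hm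
    have h1 := h i m
    have k1 := util_key π S (Function.update fstar i m) i
    have k2 := util_key π S fstar i
    rw [Function.update_self] at k1
    nlinarith
  · intro h i m
    by_cases hm : m = fstar i
    · subst hm
      rw [Function.update_eq_self]
    · have h1 := h i m hm
      have k1 := util_key π S (Function.update fstar i m) i
      have k2 := util_key π S fstar i
      rw [Function.update_self] at k1
      nlinarith
end
end

section
/- In the hardmax platform game, let m ∈ {1,…,M} and let f* = (m,…,m) be the homogeneous profile in which every platform chooses model m. Then f* is a pure Nash equilibrium if and only if for every platform i and every model k with k ≠ m: T_m − T_k ≥ δ_i((k; f*_{−i})) − δ_i(f*), where δ_i((k; f*_{−i})) is platform i's deviation advantage in the profile obtained from f* by replacing its i-th entry by k. -/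
open Finset

noncomputable section

lemma util_eq {Θ : Type*} [Fintype Θ] {M N : ℕ} (hN : 1 ≤ N)
    (π : Θ → ℝ) (S : Fin M → Θ → ℝ) (f : Fin N → Fin M) (i : Fin N) :
    util π S f i = (avgT π S (f i) + devAdv π S f i) / N := by
  have hNR : (0:ℝ) < N := by exact_mod_cast hN
  unfold util avgT devAdv
  rw [← Finset.sum_add_distrib, Finset.sum_div]
  apply Finset.sum_congr rfl
  intro θ _
  unfold hardP Zterm
  by_cases h : i ∈ attains S f θ
  · have hA : (0:ℝ) < (attains S f θ).card := by
      exact_mod_cast Finset.card_pos.mpr ⟨i, h⟩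
    simp only [h, if_true]
    field_simp
    ring
  · simp only [h, if_false]
    ring

/-- the homogeneous profile `(m,…,m)` is a pure Nash equilibrium iff
`T_m − T_k ≥ δ_i((k; f*_{−i})) − δ_i(f*)` for every platform `i` and model `k ≠ m`. -/
theorem stmt4 {Θ : Type*} [Fintype Θ] [Nonempty Θ] {M N : ℕ}
    (hM : 1 ≤ M) (hN : 1 ≤ N)
    (π : Θ → ℝ) (hπ0 : ∀ θ, 0 ≤ π θ) (hπ1 : ∑ θ, π θ = 1)
    (S : Fin M → Θ → ℝ) (m : Fin M) :
    IsPNE π S (fun _ : Fin N => m) ↔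
      ∀ (i : Fin N) (k : Fin M), k ≠ m →
        avgT π S m - avgT π S k ≥
          devAdv π S (Function.update (fun _ : Fin N => m) i k) i
            - devAdv π S (fun _ : Fin N => m) i := by
  have hNR : (0:ℝ) < N := by exact_mod_cast hN
  have key : ∀ (g : Fin N → Fin M) (i : Fin N),
      util π S g i = (avgT π S (g i) + devAdv π S g i) / N := util_eq hN π S
  constructor
  · intro h i k _
    have h2 := h i k
    rw [key, key] at h2
    simp only [Function.update_self] at h2
    have := (div_le_div_iff_of_pos_right hNR).mp h2
    linarith
  · intro h i k
    by_cases hk : k = m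
    · rw [hk, show Function.update (fun _ : Fin N => m) i m = fun _ : Fin N => m from
        Function.update_eq_self i _]
    · have h2 := h i k hk
      rw [key, key]
      simp only [Function.update_self]
      exact div_le_div_of_nonneg_right (by linarith) hNR.le
end
end

section
/- In the hardmax platform game with N = 2 platforms and M models, let i ≠ j be two models. The profile (i, j) is a pure Nash equilibrium if and only if: T_i + δ_{ij} ≥ T_j; T_i + δ_{ij} ≥ T_k + δ_{kj} for every model k ≠ j; T_j + δ_{ji} ≥ T_i; and T_j + δ_{ji} ≥ T_k + δ_{ki} for every model k ≠ i. -/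
open Finset

noncomputable section

/-- Pairwise attraction term `Z_{ij}(θ)` for two models `i`, `j`. -/
def Zpair {Θ : Type*} {M : ℕ} (S : Fin M → Θ → ℝ) (i j : Fin M) (θ : Θ) : ℝ :=
  if S j θ < S i θ then S i θ
  else if S i θ < S j θ then -S i θ
  else 0

/-- Pairwise deviation advantage `δ_{ij}`. -/
def devPair {Θ : Type*} [Fintype Θ] {M : ℕ} (π : Θ → ℝ) (S : Fin M → Θ → ℝ)
    (i j : Fin M) : ℝ :=
  ∑ θ, π θ * Zpair S i j θ

/-!
With two platforms, platform 0 playing model `a` against model `b` collects, on user type `θ`,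
`S_a(θ)` when it wins, `0` when it loses and `S_a(θ)/2` on a tie: exactly `(S_a(θ) + Z_ab(θ))/2`.
Hence `U_0(a, b) = (T_a + δ_ab)/2` and, swapping the platforms, `U_1(a, b) = (T_b + δ_ba)/2`, so the
equilibrium conditions are the comparisons `T_k + δ_kb ≤ T_a + δ_ab` and `T_k + δ_ka ≤ T_b + δ_ba`
for all models `k`; the case `k = b` (resp. `k = a`) reads `T_b ≤ T_a + δ_ab` since `δ_bb = 0`.
-/

section

variable {Θ : Type*} [Fintype Θ] {M N : ℕ} (π : Θ → ℝ) (S : Fin M → Θ → ℝ)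

lemma attains_comp_perm (f : Fin N → Fin M) (σ : Equiv.Perm (Fin N)) (θ : Θ) :
    attains S (f ∘ σ) θ = (attains S f θ).map σ.symm.toEmbedding := by
  ext x
  simp [attains, mem_map_equiv,
    σ.forall_congr_right (q := fun k => S (f k) θ ≤ S (f (σ x)) θ)]

lemma hardP_comp_perm (f : Fin N → Fin M) (σ : Equiv.Perm (Fin N)) (θ : Θ) (i : Fin N) :
    hardP S (f ∘ σ) θ i = hardP S f θ (σ i) := by
  simp [hardP, attains_comp_perm, mem_map_equiv]

lemma util_comp_perm (f : Fin N → Fin M) (σ : Equiv.Perm (Fin N)) (i : Fin N) :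
    util π S (f ∘ σ) i = util π S f (σ i) := by
  simp [util, hardP_comp_perm]

lemma hardP_pair_zero_mul (a b : Fin M) (θ : Θ) :
    hardP S ![a, b] θ 0 * S a θ = (S a θ + Zpair S a b θ) / 2 := by
  rcases lt_trichotomy (S a θ) (S b θ) with h | h | h
  · have : attains S ![a, b] θ = {1} := by
      ext x; fin_cases x <;> simp [attains, Fin.forall_fin_two, h.le, h]
    simp [hardP, this, Zpair, h, h.not_gt]
  · have : attains S ![a, b] θ = univ := by
      ext x; fin_cases x <;> simp [attains, Fin.forall_fin_two, h]
    simp [hardP, this, Zpair, h, div_eq_inv_mul]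
  · have : attains S ![a, b] θ = {0} := by
      ext x; fin_cases x <;> simp [attains, Fin.forall_fin_two, h.le, h]
    simp [hardP, this, Zpair, h]

lemma util_pair_zero (a b : Fin M) :
    util π S ![a, b] 0 = (avgT π S a + devPair π S a b) / 2 := by
  simp only [util, avgT, devPair, Matrix.cons_val_zero, mul_assoc, hardP_pair_zero_mul,
    ← sum_add_distrib, sum_div]
  exact sum_congr rfl fun θ _ => by ring

lemma util_pair_one (a b : Fin M) :
    util π S ![a, b] 1 = (avgT π S b + devPair π S b a) / 2 := by
  have : ![a, b] = ![b, a] ∘ Equiv.swap 0 1 := by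
    funext x; fin_cases x <;> simp
  rw [this, util_comp_perm, Equiv.swap_apply_right, util_pair_zero]

lemma isPNE_pair_iff (a b : Fin M) :
    IsPNE π S ![a, b] ↔
      (∀ m, avgT π S m + devPair π S m b ≤ avgT π S a + devPair π S a b) ∧
      (∀ m, avgT π S m + devPair π S m a ≤ avgT π S b + devPair π S b a) := by
  have update_zero (m : Fin M) : Function.update ![a, b] 0 m = ![m, b] :=
    Fin.update_cons_zero ..
  have update_one (m : Fin M) : Function.update ![a, b] 1 m = ![a, m] := by
    funext x; fin_cases x <;> simp
  simp only [IsPNE, Fin.forall_fin_two, update_zero, update_one, util_pair_zero,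
    util_pair_one, div_le_div_iff_of_pos_right (two_pos (α := ℝ))]

lemma devPair_self (j : Fin M) : devPair π S j j = 0 := by
  simp [devPair, Zpair]

end

theorem stmt10_general {Θ : Type*} [Fintype Θ] {M : ℕ}
    (π : Θ → ℝ)
    (S : Fin M → Θ → ℝ) (i j : Fin M) :
    IsPNE π S ![i, j] ↔
      (avgT π S j ≤ avgT π S i + devPair π S i j ∧
       (∀ k : Fin M, k ≠ j → avgT π S k + devPair π S k j ≤ avgT π S i + devPair π S i j) ∧
       avgT π S i ≤ avgT π S j + devPair π S j i ∧
       (∀ k : Fin M, k ≠ i → avgT π S k + devPair π S k i ≤ avgT π S j + devPair π S j i)) := by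
  have split {P : Fin M → Prop} (c : Fin M) : (∀ m, P m) ↔ P c ∧ ∀ k, k ≠ c → P k :=
    ⟨fun h => ⟨h c, fun k _ => h k⟩, fun ⟨hc, h⟩ k => if hk : k = c then hk ▸ hc else h k hk⟩
  rw [isPNE_pair_iff, and_congr (split j) (split i)]
  simp only [devPair_self, add_zero, and_assoc]

/-- with two platforms and `i ≠ j`, the profile `(i, j)` is a PNE iff
`T_i + δ_{ij} ≥ T_j`, `T_i + δ_{ij} ≥ T_k + δ_{kj}` for all `k ≠ j`,
`T_j + δ_{ji} ≥ T_i`, and `T_j + δ_{ji} ≥ T_k + δ_{ki}` for all `k ≠ i`. -/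
theorem stmt10 {Θ : Type*} [Fintype Θ] [Nonempty Θ] {M : ℕ}
    (hM : 1 ≤ M)
    (π : Θ → ℝ) (hπ0 : ∀ θ, 0 ≤ π θ) (hπ1 : ∑ θ, π θ = 1)
    (S : Fin M → Θ → ℝ) (i j : Fin M) (hij : i ≠ j) :
    IsPNE π S ![i, j] ↔
      (avgT π S j ≤ avgT π S i + devPair π S i j ∧
       (∀ k : Fin M, k ≠ j → avgT π S k + devPair π S k j ≤ avgT π S i + devPair π S i j) ∧
       avgT π S i ≤ avgT π S j + devPair π S j i ∧
       (∀ k : Fin M, k ≠ i → avgT π S k + devPair π S k i ≤ avgT π S j + devPair π S j i)) :=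
  stmt10_general π S i j
end
end

section
/- In the hardmax platform game with N = 2 platforms and M models, for a model m ∈ {1,…,M}, the homogeneous profile (m, m) is a pure Nash equilibrium if and only if T_m − T_k ≥ δ_{km} for every model k ≠ m. -/
open Finset

noncomputable section

lemma attains_two {Θ : Type*} [Fintype Θ] {M : ℕ} (S : Fin M → Θ → ℝ)
    (a b : Fin M) (θ : Θ) :
    attains S ![a, b] θ =
      if S b θ < S a θ then {0} else if S a θ < S b θ then {1} else Finset.univ := by
  unfold attains
  rcases lt_trichotomy (S a θ) (S b θ) with h | h | h
  · ext x
    fin_cases x <;>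
      simp [Fin.forall_fin_two, h, h.le, h.not_gt, not_le.mpr h]
  · ext x
    fin_cases x <;>
      simp [Fin.forall_fin_two, h, lt_irrefl]
  · ext x
    fin_cases x <;>
      simp [Fin.forall_fin_two, h, h.le, h.not_gt, not_le.mpr h]

lemma card_univ_fin_two : (Finset.univ : Finset (Fin 2)).card = 2 := by simp

lemma util_homog {Θ : Type*} [Fintype Θ] {M : ℕ} (π : Θ → ℝ) (S : Fin M → Θ → ℝ)
    (m : Fin M) (i : Fin 2) :
    util π S ![m, m] i = avgT π S m / 2 := by
  unfold util avgT
  rw [Finset.sum_div]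
  refine Finset.sum_congr rfl fun θ _ => ?_
  have h := attains_two S m m θ
  simp only [lt_irrefl, if_false] at h
  have hm : (![m, m] : Fin 2 → Fin M) i = m := by fin_cases i <;> rfl
  rw [hm]
  unfold hardP
  rw [h]
  simp [card_univ_fin_two]
  ring

lemma util_dev0 {Θ : Type*} [Fintype Θ] {M : ℕ} (π : Θ → ℝ) (S : Fin M → Θ → ℝ)
    (k m : Fin M) :
    util π S ![k, m] 0 = (devPair π S k m + avgT π S k) / 2 := by
  unfold util devPair avgT
  rw [← Finset.sum_add_distrib, Finset.sum_div]
  refine Finset.sum_congr rfl fun θ _ => ?_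
  have h := attains_two S k m θ
  show π θ * hardP S ![k, m] θ 0 * S k θ = _
  unfold hardP Zpair
  rw [h]
  rcases lt_trichotomy (S k θ) (S m θ) with hlt | heq | hgt
  · simp [hlt, hlt.not_gt]
  · simp [heq, lt_irrefl, card_univ_fin_two]
    ring
  · simp [hgt, hgt.not_gt]

lemma util_dev1 {Θ : Type*} [Fintype Θ] {M : ℕ} (π : Θ → ℝ) (S : Fin M → Θ → ℝ)
    (k m : Fin M) :
    util π S ![m, k] 1 = (devPair π S k m + avgT π S k) / 2 := by
  unfold util devPair avgT
  rw [← Finset.sum_add_distrib, Finset.sum_div]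
  refine Finset.sum_congr rfl fun θ _ => ?_
  have h := attains_two S m k θ
  show π θ * hardP S ![m, k] θ 1 * S k θ = _
  unfold hardP Zpair
  rw [h]
  rcases lt_trichotomy (S k θ) (S m θ) with hlt | heq | hgt
  · simp [hlt, hlt.not_gt]
  · simp [heq, lt_irrefl, card_univ_fin_two]
    ring
  · simp [hgt, hgt.not_gt]

lemma update0 {M : ℕ} (m k : Fin M) : Function.update ![m, m] (0 : Fin 2) k = ![k, m] := by
  funext x; fin_cases x <;> simp [Function.update]

lemma update1 {M : ℕ} (m k : Fin M) : Function.update ![m, m] (1 : Fin 2) k = ![m, k] := by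
  funext x; fin_cases x <;> simp [Function.update]

/-- with two platforms, the homogeneous profile `(m, m)` is a PNE iff
`T_m − T_k ≥ δ_{km}` for every model `k ≠ m`. -/
theorem stmt11 {Θ : Type*} [Fintype Θ] [Nonempty Θ] {M : ℕ}
    (hM : 1 ≤ M)
    (π : Θ → ℝ) (hπ0 : ∀ θ, 0 ≤ π θ) (hπ1 : ∑ θ, π θ = 1)
    (S : Fin M → Θ → ℝ) (m : Fin M) :
    IsPNE π S ![m, m] ↔
      ∀ k : Fin M, k ≠ m → avgT π S m - avgT π S k ≥ devPair π S k m := by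
  constructor
  · intro h k _
    have := h 0 k
    rw [update0, util_dev0 π S k m, util_homog π S m 0] at this
    linarith
  · intro h i k
    have hcond : devPair π S k m + avgT π S k ≤ avgT π S m := by
      by_cases hk : k = m
      · subst hk
        have : devPair π S k k = 0 := by
          unfold devPair Zpair; simp [lt_irrefl]
        linarith [this.le, this.ge]
      · have := h k hk; linarith
    fin_cases i
    · show util π S (Function.update ![m, m] 0 k) 0 ≤ util π S ![m, m] 0
      rw [update0, util_dev0 π S k m, util_homog π S m 0]
      linarith
    · show util π S (Function.update ![m, m] 1 k) 1 ≤ util π S ![m, m] 1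
      rw [update1, util_dev1 π S k m, util_homog π S m 1]
      linarith
end
end

section
/- In the platform game, suppose there exists Δ > 0 such that for every strategy profile f ∈ {1,…,M}^N there exist a platform i and a model m with U_i((m; f_{−i})) ≥ U_i(f) + Δ (strict nonexistence of pure Nash equilibrium for the hardmax game). Then there exists τ_0 > 0 such that for every τ with 0 < τ ≤ τ_0, the softmax game at temperature τ admits no pure Nash equilibrium; indeed, for every profile f there exist a platform i and a model m with U_i^soft((m; f_{−i}); τ) > U_i^soft(f; τ). -/
/-!
As `τ → 0⁺`, `exp ((x k - max x) / τ)` tends to `1` on the maximizers of `x` and to `0`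
elsewhere, so softmax choice probabilities converge to the hardmax ones and softmax
utilities converge to hardmax utilities, profile by profile. Each of the finitely many
profiles has a deviation with a strictly positive hardmax gain, and that gain survives
for all sufficiently small temperatures.
-/

open Finset

noncomputable section

/-- Softmax user-choice probability `p_i^soft(θ; f, τ)` at temperature `τ`. -/
def softP {Θ : Type*} [Fintype Θ] {M N : ℕ} (S : Fin M → Θ → ℝ) (τ : ℝ)
    (f : Fin N → Fin M) (θ : Θ) (i : Fin N) : ℝ :=
  Real.exp (S (f i) θ / τ) / ∑ k : Fin N, Real.exp (S (f k) θ / τ)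

/-- Softmax utility `U_i^soft(f; τ)` of platform `i`. -/
def softU {Θ : Type*} [Fintype Θ] {M N : ℕ} (π : Θ → ℝ) (S : Fin M → Θ → ℝ)
    (τ : ℝ) (f : Fin N → Fin M) (i : Fin N) : ℝ :=
  ∑ θ, π θ * softP S τ f θ i * S (f i) θ

open Filter Topology

lemma tendsto_exp_div_nhdsGT_zero {c : ℝ} (hc : c ≤ 0) :
    Tendsto (fun τ : ℝ => Real.exp (c / τ)) (𝓝[>] 0) (𝓝 (if c = 0 then 1 else 0)) := by
  rcases hc.eq_or_lt with rfl | hneg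
  · simp
  · rw [if_neg hneg.ne]
    refine Real.tendsto_exp_atBot.comp ?_
    exact (tendsto_inv_nhdsGT_zero.const_mul_atTop_of_neg hneg).congr
      fun τ => (div_eq_mul_inv c τ).symm

lemma tendsto_softmax_nhdsGT_zero {ι : Type*} [Fintype ι] [DecidableEq ι] (x : ι → ℝ)
    [DecidablePred fun j => ∀ k, x k ≤ x j] (i : ι) :
    Tendsto (fun τ : ℝ => Real.exp (x i / τ) / ∑ k, Real.exp (x k / τ)) (𝓝[>] 0)
      (𝓝 (if i ∈ univ.filter (fun j => ∀ k, x k ≤ x j)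
        then 1 / (#(univ.filter fun j => ∀ k, x k ≤ x j) : ℝ) else 0)) := by
  set A := univ.filter fun j => ∀ k, x k ≤ x j
  have : Nonempty ι := ⟨i⟩
  obtain ⟨j₀, hj₀⟩ := Finite.exists_max x
  have mem_A : ∀ j, j ∈ A ↔ x j - x j₀ = 0 := fun j => by
    simp only [A, mem_filter, mem_univ, true_and, sub_eq_zero]
    exact ⟨fun h => le_antisymm (hj₀ j) (h j₀), fun h k => h ▸ hj₀ k⟩
  have hA : (0 : ℝ) < #A := Nat.cast_pos.2 (card_pos.2 ⟨j₀, (mem_A j₀).2 (sub_self _)⟩)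
  have shifted : ∀ j, Tendsto (fun τ : ℝ => Real.exp ((x j - x j₀) / τ)) (𝓝[>] 0)
      (𝓝 (if j ∈ A then 1 else 0)) := fun j => by
    simpa only [mem_A] using tendsto_exp_div_nhdsGT_zero (sub_nonpos.2 (hj₀ j))
  have hsum : Tendsto (fun τ : ℝ => ∑ k, Real.exp ((x k - x j₀) / τ)) (𝓝[>] 0) (𝓝 #A) := by
    simpa only [sum_boole, filter_mem_eq_inter, univ_inter]
      using tendsto_finsetSum univ fun k _ => shifted k
  have rescale : ∀ τ : ℝ, Real.exp ((x i - x j₀) / τ) / ∑ k, Real.exp ((x k - x j₀) / τ)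
      = Real.exp (x i / τ) / ∑ k, Real.exp (x k / τ) := fun τ => by
    simp only [sub_div, Real.exp_sub, ← sum_div]
    exact div_div_div_cancel_right₀ (Real.exp_pos _).ne' _ _
  simpa only [ite_div, zero_div] using ((shifted i).div hsum hA.ne').congr rescale

lemma tendsto_softP_hardP {Θ : Type*} [Fintype Θ] {M N : ℕ} (S : Fin M → Θ → ℝ)
    (f : Fin N → Fin M) (θ : Θ) (i : Fin N) :
    Tendsto (fun τ => softP S τ f θ i) (𝓝[>] 0) (𝓝 (hardP S f θ i)) :=
  tendsto_softmax_nhdsGT_zero (fun k => S (f k) θ) i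

lemma tendsto_softU_util {Θ : Type*} [Fintype Θ] {M N : ℕ} (π : Θ → ℝ)
    (S : Fin M → Θ → ℝ) (f : Fin N → Fin M) (i : Fin N) :
    Tendsto (fun τ => softU π S τ f i) (𝓝[>] 0) (𝓝 (util π S f i)) :=
  tendsto_finsetSum univ fun θ _ =>
    ((tendsto_softP_hardP S f θ i).const_mul (π θ)).mul_const (S (f i) θ)

theorem stmt15_general {Θ : Type*} [Fintype Θ] {M N : ℕ}
    (π : Θ → ℝ)
    (S : Fin M → Θ → ℝ)
    (Δ : ℝ) (hΔ : 0 < Δ)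
    (hhard : ∀ f : Fin N → Fin M, ∃ (i : Fin N) (m : Fin M),
      util π S f i + Δ ≤ util π S (Function.update f i m) i) :
    ∃ τ₀ : ℝ, 0 < τ₀ ∧
      ∀ τ : ℝ, 0 < τ → τ ≤ τ₀ →
        ∀ f : Fin N → Fin M, ∃ (i : Fin N) (m : Fin M),
          softU π S τ f i < softU π S τ (Function.update f i m) i := by
  choose dev model hgain using hhard
  have eventually_profitable : ∀ f : Fin N → Fin M, ∀ᶠ τ in 𝓝[>] 0,
      softU π S τ f (dev f) < softU π S τ (Function.update f (dev f) (model f)) (dev f) :=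
    fun f => (tendsto_softU_util π S f (dev f)).eventually_lt
      (tendsto_softU_util π S _ (dev f)) (by linarith [hgain f])
  obtain ⟨τ₀, hτ₀, hsub⟩ :=
    mem_nhdsGT_iff_exists_Ioc_subset.1 (eventually_all.2 eventually_profitable)
  exact ⟨τ₀, hτ₀, fun τ hτ hττ₀ f => ⟨dev f, model f, hsub ⟨hτ, hττ₀⟩ f⟩⟩

/-- if the hardmax game admits no PNE in the strict sense (every profile
has a deviation improving utility by at least `Δ > 0`), then for all sufficiently small
temperatures the softmax game admits no pure Nash equilibrium: every profile has a
strictly profitable deviation. -/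
theorem stmt15 {Θ : Type*} [Fintype Θ] [Nonempty Θ] {M N : ℕ}
    (hM : 1 ≤ M) (hN : 1 ≤ N)
    (π : Θ → ℝ) (hπ0 : ∀ θ, 0 ≤ π θ) (hπ1 : ∑ θ, π θ = 1)
    (S : Fin M → Θ → ℝ)
    (Δ : ℝ) (hΔ : 0 < Δ)
    (hhard : ∀ f : Fin N → Fin M, ∃ (i : Fin N) (m : Fin M),
      util π S f i + Δ ≤ util π S (Function.update f i m) i) :
    ∃ τ₀ : ℝ, 0 < τ₀ ∧
      ∀ τ : ℝ, 0 < τ → τ ≤ τ₀ →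
        ∀ f : Fin N → Fin M, ∃ (i : Fin N) (m : Fin M),
          softU π S τ f i < softU π S τ (Function.update f i m) i :=
  stmt15_general π S Δ hΔ hhard
end
end
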